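/- arXiv:1810.08294 — 4 statements merged into one kernel-verified Lean document; each statement's English description precedes it below -/
import Mathlib

section
/- Let l ≥ 1 be an integer, δ₀ > 0, M > 0, and let ω : (0,δ₀] → ℝ be continuous with |ω(x)| ≤ M x² for all x ∈ (0,δ₀]. Then there exist δ ∈ (0,δ₀], a constant C > 0, and twice continuously differentiable solutions y₁, y₂ : (0,δ] → ℝ of the ordinary differential equation y''(x) = (l(l+1)/x²)(1 + ω(x)) y(x) such that |x^{−(l+1)} y₁(x) − 1| ≤ C x² and |x^{l} y₂(x) − 1| ≤ C x² for all x ∈ (0,δ]. In particular y₁ and y₂ are linearly independent. -/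
/-!
Writing `y = x^(l+1) U`, the equation becomes `(x^(2l+2) U')' = x^(2l+2) p U` with
`p = l(l+1) ω / x²` bounded by `l(l+1) M`. Its integrated form
`U(x) = 1 + ∫₀ˣ s^(-2l-2) ∫₀ˢ t^(2l+2) p(t) U(t) dt ds` is a Volterra equation whose Picard map is
a contraction on `[0, b]` as soon as `l(l+1) M b² ≤ 1`; its fixed point satisfies
`|U - 1| ≤ l(l+1) M x²`. This is the regular solution `y₁`.

The singular solution comes from reduction of order, `y₂ = (2l+1) y₁ ∫ₓ^δ y₁⁻²`. Since
`y₁⁻² = t^(-2l-2) (1 + O(t²))`, the integral is `x^(-2l-1) / (2l+1)` up to `-δ^(-2l-1) / (2l+1)`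
and an error `O(∫ₓ^δ t^(-2l)) = O(x^(1-2l))`, the last step needing `l ≥ 1`; hence
`x^l y₂ = 1 + O(x²)`.
Independence is read off at the endpoints: `y₂(δ) = 0 ≠ y₁(δ)`, and `y₂ > 0` on `(0, δ)`.
-/

noncomputable section

open Set MeasureTheory intervalIntegral

lemma intervalIntegrable_of_continuousOn_Ioc {f : ℝ → ℝ} {a b C : ℝ} (hab : a ≤ b)
    (hf : ContinuousOn f (Ioc a b)) (hC : ∀ t ∈ Ioc a b, |f t| ≤ C) :
    IntervalIntegrable f volume a b := by
  rw [intervalIntegrable_iff_integrableOn_Ioc_of_le hab]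
  exact .of_bound measure_Ioc_lt_top (hf.aestronglyMeasurable measurableSet_Ioc) C
    (ae_restrict_of_forall_mem measurableSet_Ioc hC)

lemma abs_integral_le_of_abs_le_mul_pow {f : ℝ → ℝ} {x B : ℝ} (m : ℕ) (hx : 0 ≤ x)
    (hf : ∀ t ∈ Ioc 0 x, |f t| ≤ B * t ^ m) :
    |∫ t in (0 : ℝ)..x, f t| ≤ B * x ^ (m + 1) / (m + 1) := by
  calc |∫ t in (0 : ℝ)..x, f t| ≤ ∫ t in (0 : ℝ)..x, B * t ^ m := by
        rw [← Real.norm_eq_abs]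
        exact norm_integral_le_of_norm_le hx (ae_of_all _ hf)
          ((by fun_prop : Continuous fun t : ℝ => B * t ^ m).intervalIntegrable _ _)
    _ = B * x ^ (m + 1) / (m + 1) := by
        simp only [intervalIntegral.integral_const_mul, integral_pow, ne_eq, Nat.add_eq_zero_iff,
          one_ne_zero, and_false, not_false_eq_true, zero_pow, sub_zero]
        ring

lemma integral_inv_pow_succ {m : ℕ} (hm : m ≠ 0) {x δ : ℝ} (hx : 0 < x) (hxδ : x ≤ δ) :
    ∫ t in x..δ, (t ^ (m + 1))⁻¹ = ((x ^ m)⁻¹ - (δ ^ m)⁻¹) / m := by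
  obtain ⟨k, rfl⟩ : ∃ k, m = k + 1 := ⟨m - 1, by omega⟩
  have hpos : ∀ t ∈ uIcc x δ, t ≠ 0 := fun t ht =>
    (hx.trans_le (uIcc_of_le hxδ ▸ ht).1).ne'
  rw [integral_eq_sub_of_hasDerivAt (f := fun t => -(t ^ (k + 1))⁻¹ / (k + 1 : ℝ))]
  · push_cast; ring
  · intro t ht
    have h : HasDerivAt (fun t => -(t ^ (k + 1))⁻¹ / (k + 1 : ℝ)) _ t :=
      ((hasDerivAt_pow (k + 1) t).inv (pow_ne_zero _ (hpos t ht))).neg.div_const _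
    refine h.congr_deriv ?_
    have := hpos t ht
    simp only [Nat.add_sub_cancel]
    field_simp
    push_cast
    ring
  · exact (continuousOn_of_forall_continuousAt fun t ht =>
      ((continuousAt_id.pow _).inv₀ (pow_ne_zero _ (hpos t ht)))).intervalIntegrable

lemma abs_inv_sq_sub_one_le {u ε : ℝ} (hε : ε ≤ 1 / 2) (hu : |u - 1| ≤ ε) :
    |(u ^ 2)⁻¹ - 1| ≤ 10 * ε := by
  obtain ⟨hu₁, hu₂⟩ := abs_le.mp hu
  have hu0 : u ≠ 0 := by linarith
  rw [show (u ^ 2)⁻¹ - 1 = (1 - u) * (1 + u) / u ^ 2 by field_simp; ring, abs_div, abs_mul,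
    abs_sub_comm, abs_of_pos (by linarith : 0 < 1 + u), abs_of_pos (by positivity : 0 < u ^ 2),
    div_le_iff₀ (by positivity)]
  calc |u - 1| * (1 + u) ≤ ε * (5 / 2) :=
        mul_le_mul hu (by linarith) (by linarith) ((abs_nonneg _).trans hu)
    _ ≤ 10 * ε * u ^ 2 := by
        have : 1 / 4 ≤ u ^ 2 := by nlinarith
        nlinarith [(abs_nonneg _).trans hu]

lemma hasDerivAt_integral_of_continuousOn {f : ℝ → ℝ} {s : Set ℝ} {a x : ℝ} (hs : IsOpen s)
    (hx : x ∈ s) (hf : ContinuousOn f s) (hint : IntervalIntegrable f volume a x) :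
    HasDerivAt (fun y => ∫ t in a..y, f t) (f x) x :=
  integral_hasDerivAt_right hint (hf.stronglyMeasurableAtFilter hs x hx)
    (hf.continuousAt (hs.mem_nhds hx))

/-- `U = 1 + volterraOp n p U` is the integrated form of `(xⁿ U')' = xⁿ p U` with `U(0) = 1`,
`volterraInner n p U` being `xⁿ U'`. -/
def volterraInner (n : ℕ) (p f : ℝ → ℝ) (s : ℝ) : ℝ :=
  ∫ t in (0 : ℝ)..s, t ^ n * p t * f t

def volterraOp (n : ℕ) (p f : ℝ → ℝ) (x : ℝ) : ℝ :=
  ∫ s in (0 : ℝ)..x, volterraInner n p f s / s ^ n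

open BoundedContinuousFunction

namespace Volterra

variable {n : ℕ} {p : ℝ → ℝ} {b P x : ℝ}

lemma abs_integrand_le (hP : ∀ t ∈ Ioc 0 b, |p t| ≤ P) (w : ℝ →ᵇ ℝ) {t : ℝ}
    (ht : t ∈ Ioc 0 b) : |t ^ n * p t * w t| ≤ P * ‖w‖ * t ^ n := by
  rw [abs_mul, abs_mul, abs_pow, abs_of_pos ht.1]
  have htn : 0 ≤ t ^ n := pow_nonneg ht.1.le n
  calc t ^ n * |p t| * |w t| ≤ t ^ n * P * ‖w‖ :=
        mul_le_mul (mul_le_mul_of_nonneg_left (hP t ht) htn) (w.norm_coe_le_norm t)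
          (abs_nonneg _) (mul_nonneg htn ((abs_nonneg _).trans (hP t ht)))
    _ = P * ‖w‖ * t ^ n := by ring

lemma intervalIntegrable_integrand (hp : ContinuousOn p (Ioc 0 b))
    (hP : ∀ t ∈ Ioc 0 b, |p t| ≤ P) (w : ℝ →ᵇ ℝ) (hx : x ∈ Icc 0 b) :
    IntervalIntegrable (fun t => t ^ n * p t * w t) volume 0 x := by
  refine (intervalIntegrable_of_continuousOn_Ioc (C := P * ‖w‖ * b ^ n) (hx.1.trans hx.2)
    (((continuousOn_pow n).mul hp).mul w.continuous.continuousOn) fun t ht => ?_).mono_set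
    (uIcc_subset_uIcc_left (by rwa [uIcc_of_le (hx.1.trans hx.2)]))
  have hP0 : 0 ≤ P := (abs_nonneg _).trans (hP t ht)
  exact (abs_integrand_le hP w ht).trans (by gcongr; exacts [ht.1.le, ht.2])

lemma abs_volterraInner_le (hP : ∀ t ∈ Ioc 0 b, |p t| ≤ P) (w : ℝ →ᵇ ℝ) (hx : x ∈ Icc 0 b) :
    |volterraInner n p w x| ≤ P * ‖w‖ * x ^ (n + 1) := by
  have hP0 : 0 ≤ P * ‖w‖ * x ^ (n + 1) := by
    rcases hx.1.eq_or_lt with rfl | hx0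
    · simp
    · exact mul_nonneg (mul_nonneg ((abs_nonneg _).trans (hP x ⟨hx0, hx.2⟩)) (norm_nonneg w))
        (pow_nonneg hx.1 _)
  calc |volterraInner n p w x| ≤ P * ‖w‖ * x ^ (n + 1) / (n + 1) :=
        abs_integral_le_of_abs_le_mul_pow n hx.1 fun t ht =>
          abs_integrand_le hP w ⟨ht.1, ht.2.trans hx.2⟩
    _ ≤ P * ‖w‖ * x ^ (n + 1) := div_le_self hP0 (by linarith [(n.cast_nonneg : (0:ℝ) ≤ n)])

lemma continuousOn_volterraInner (hp : ContinuousOn p (Ioc 0 b)) (hP : ∀ t ∈ Ioc 0 b, |p t| ≤ P)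
    (w : ℝ →ᵇ ℝ) : ContinuousOn (volterraInner n p w) (Icc 0 b) := by
  rcases le_or_gt 0 b with hb | hb
  · have h := continuousOn_primitive_interval'
      (intervalIntegrable_integrand (n := n) hp hP w (right_mem_Icc.2 hb)) left_mem_uIcc
    rw [uIcc_of_le hb] at h
    exact h
  · simp [Icc_eq_empty_of_lt hb]

lemma hasDerivAt_volterraInner (hp : ContinuousOn p (Ioc 0 b)) (hP : ∀ t ∈ Ioc 0 b, |p t| ≤ P)
    (w : ℝ →ᵇ ℝ) (hx : x ∈ Ioo 0 b) :
    HasDerivAt (volterraInner n p w) (x ^ n * p x * w x) x :=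
  hasDerivAt_integral_of_continuousOn isOpen_Ioo hx
    (((continuousOn_pow n).mul (hp.mono Ioo_subset_Ioc_self)).mul w.continuous.continuousOn)
    (intervalIntegrable_integrand hp hP w (Ioo_subset_Icc_self hx))

lemma abs_volterraInner_div_le (hP : ∀ t ∈ Ioc 0 b, |p t| ≤ P) (w : ℝ →ᵇ ℝ)
    (hx : x ∈ Icc 0 b) : |volterraInner n p w x / x ^ n| ≤ P * ‖w‖ * x := by
  rcases hx.1.eq_or_lt with rfl | hx0
  · simp [volterraInner]
  rw [abs_div, abs_of_pos (pow_pos hx0 n), div_le_iff₀ (pow_pos hx0 n), mul_assoc, ← pow_succ']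
  exact abs_volterraInner_le hP w hx

lemma intervalIntegrable_volterraInner_div (hp : ContinuousOn p (Ioc 0 b))
    (hP : ∀ t ∈ Ioc 0 b, |p t| ≤ P) (w : ℝ →ᵇ ℝ) (hx : x ∈ Icc 0 b) :
    IntervalIntegrable (fun s => volterraInner n p w s / s ^ n) volume 0 x := by
  have hb : 0 ≤ b := hx.1.trans hx.2
  refine (intervalIntegrable_of_continuousOn_Ioc (C := P * ‖w‖ * b) hb
    (((continuousOn_volterraInner hp hP w).mono Ioc_subset_Icc_self).div (continuousOn_pow n)
      fun s hs => pow_ne_zero n hs.1.ne') fun s hs => ?_).mono_set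
    (uIcc_subset_uIcc_left (by rwa [uIcc_of_le hb]))
  have hP0 : 0 ≤ P * ‖w‖ := mul_nonneg ((abs_nonneg _).trans (hP s hs)) (norm_nonneg w)
  exact (abs_volterraInner_div_le hP w (Ioc_subset_Icc_self hs)).trans
    (mul_le_mul_of_nonneg_left hs.2 hP0)

lemma abs_volterraOp_le (hP : ∀ t ∈ Ioc 0 b, |p t| ≤ P) (w : ℝ →ᵇ ℝ) (hx : x ∈ Icc 0 b) :
    |volterraOp n p w x| ≤ P * ‖w‖ * x ^ 2 / 2 := by
  refine (abs_integral_le_of_abs_le_mul_pow 1 hx.1 fun s hs =>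
    (abs_volterraInner_div_le (n := n) hP w ⟨hs.1.le, hs.2.trans hx.2⟩).trans_eq
      (by rw [pow_one])).trans_eq ?_
  norm_num

lemma volterraOp_sub (hp : ContinuousOn p (Ioc 0 b)) (hP : ∀ t ∈ Ioc 0 b, |p t| ≤ P)
    (w w' : ℝ →ᵇ ℝ) (hx : x ∈ Icc 0 b) :
    volterraOp n p w x - volterraOp n p w' x = volterraOp n p ⇑(w - w') x := by
  have hsub : uIcc 0 x ⊆ Icc 0 b := by rw [uIcc_of_le hx.1]; exact Icc_subset_Icc_right hx.2
  rw [volterraOp, volterraOp, ← integral_sub (intervalIntegrable_volterraInner_div hp hP w hx)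
    (intervalIntegrable_volterraInner_div hp hP w' hx)]
  refine integral_congr fun s hs => ?_
  simp only [volterraInner, ← sub_div]
  rw [← integral_sub (intervalIntegrable_integrand hp hP w (hsub hs))
    (intervalIntegrable_integrand hp hP w' (hsub hs))]
  simp only [coe_sub, Pi.sub_apply, mul_sub]

lemma continuousOn_volterraOp (hp : ContinuousOn p (Ioc 0 b)) (hP : ∀ t ∈ Ioc 0 b, |p t| ≤ P)
    (w : ℝ →ᵇ ℝ) : ContinuousOn (volterraOp n p w) (Icc 0 b) := by
  rcases le_or_gt 0 b with hb | hb
  · have h := continuousOn_primitive_interval'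
      (intervalIntegrable_volterraInner_div (n := n) hp hP w (right_mem_Icc.2 hb)) left_mem_uIcc
    rw [uIcc_of_le hb] at h
    exact h
  · simp [Icc_eq_empty_of_lt hb]

lemma hasDerivAt_volterraOp (hp : ContinuousOn p (Ioc 0 b)) (hP : ∀ t ∈ Ioc 0 b, |p t| ≤ P)
    (w : ℝ →ᵇ ℝ) (hx : x ∈ Ioo 0 b) :
    HasDerivAt (volterraOp n p w) (volterraInner n p w x / x ^ n) x :=
  hasDerivAt_integral_of_continuousOn isOpen_Ioo hx
    (((continuousOn_volterraInner hp hP w).mono Ioo_subset_Icc_self).div (continuousOn_pow n)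
      fun _ hs => pow_ne_zero n hs.1.ne')
    (intervalIntegrable_volterraInner_div hp hP w (Ioo_subset_Icc_self hx))

lemma exists_fixedPoint (hb : 0 < b) (hPb : P * b ^ 2 ≤ 1) (hp : ContinuousOn p (Ioc 0 b))
    (hP : ∀ t ∈ Ioc 0 b, |p t| ≤ P) :
    ∃ u : ℝ →ᵇ ℝ, ‖u‖ ≤ 2 ∧ ∀ x ∈ Icc 0 b, u x = 1 + volterraOp n p u x := by
  have hP0 : 0 ≤ P := (abs_nonneg _).trans (hP b ⟨hb, le_rfl⟩)
  replace hb := hb.le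
  have hproj : ∀ x, (projIcc 0 b hb x : ℝ) ∈ Icc 0 b := fun x => (projIcc 0 b hb x).2
  have hsq : ∀ x, (projIcc 0 b hb x : ℝ) ^ 2 ≤ b ^ 2 := fun x =>
    pow_le_pow_left₀ (hproj x).1 (hproj x).2 2
  -- the Picard map, with the argument clamped to `[0, b]`
  let T : (ℝ →ᵇ ℝ) → (ℝ →ᵇ ℝ) := fun w =>
    .ofNormedAddCommGroup (fun x => 1 + volterraOp n p w (projIcc 0 b hb x))
      (continuous_const.add ((continuousOn_volterraOp hp hP w).comp_continuous
        (continuous_subtype_val.comp continuous_projIcc) hproj))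
      (1 + P * ‖w‖ * b ^ 2 / 2) fun x => by
        refine (norm_add_le _ _).trans ?_
        rw [norm_one, Real.norm_eq_abs]
        have := mul_le_mul_of_nonneg_left (hsq x) (mul_nonneg hP0 (norm_nonneg w))
        linarith [abs_volterraOp_le (n := n) hP w (hproj x)]
  have hT : ContractingWith (1 / 2) T := by
    refine ⟨by norm_num, LipschitzWith.of_dist_le_mul fun w w' => ?_⟩
    rw [dist_le (by positivity)]
    intro x
    simp only [T, coe_ofNormedAddCommGroup, Real.dist_eq, add_sub_add_left_eq_sub,
      volterraOp_sub hp hP w w' (hproj x), NNReal.coe_div, NNReal.coe_one, NNReal.coe_ofNat]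
    have := mul_le_mul_of_nonneg_left (hsq x) (mul_nonneg hP0 (dist_nonneg (x := w) (y := w')))
    have := abs_volterraOp_le (n := n) hP (w - w') (hproj x)
    rw [← dist_eq_norm] at this
    nlinarith [mul_le_mul_of_nonneg_right hPb (dist_nonneg (x := w) (y := w'))]
  set u := ContractingWith.fixedPoint T hT
  have hu : ∀ x, u x = 1 + volterraOp n p u (projIcc 0 b hb x) := fun x =>
    congr($(hT.fixedPoint_isFixedPt.symm) x)
  refine ⟨u, ?_, fun x hx => by rw [hu x, projIcc_of_mem hb hx]⟩
  have hTu : ‖u‖ ≤ 1 + P * ‖u‖ * b ^ 2 / 2 :=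
    calc ‖u‖ = ‖T u‖ := by rw [hT.fixedPoint_isFixedPt]
      _ ≤ 1 + P * ‖u‖ * b ^ 2 / 2 := norm_ofNormedAddCommGroup_le _ (by positivity) _
  nlinarith [norm_nonneg u]

theorem exists_solution (hb : 0 < b) (hPb : P * b ^ 2 ≤ 1) (hp : ContinuousOn p (Ioc 0 b))
    (hP : ∀ t ∈ Ioc 0 b, |p t| ≤ P) :
    ∃ U V : ℝ → ℝ, (∀ x ∈ Ioo 0 b,
      HasDerivAt U (V x / x ^ n) x ∧ HasDerivAt V (x ^ n * p x * U x) x) ∧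
      ∀ x ∈ Icc 0 b, |U x - 1| ≤ P * x ^ 2 := by
  obtain ⟨u, hu2, hu⟩ := exists_fixedPoint (n := n) hb hPb hp hP
  refine ⟨fun x => 1 + volterraOp n p u x, volterraInner n p u, fun x hx => ⟨?_, ?_⟩, ?_⟩
  · exact (hasDerivAt_volterraOp hp hP u hx).const_add 1
  · simpa only [← hu x (Ioo_subset_Icc_self hx)] using hasDerivAt_volterraInner hp hP u hx
  · intro x hx
    have hP0 : 0 ≤ P := (abs_nonneg _).trans (hP b ⟨hb, le_rfl⟩)
    have := mul_le_mul_of_nonneg_right hu2 (mul_nonneg hP0 (sq_nonneg x))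
    rw [add_sub_cancel_left]
    nlinarith [abs_volterraOp_le (n := n) hP u hx]

end Volterra

def SolvesOn (q y d : ℝ → ℝ) (s : Set ℝ) : Prop :=
  ∀ x ∈ s, HasDerivAt y (d x) x ∧ HasDerivAt d (q x * y x) x

namespace SolvesOn

variable {q y d : ℝ → ℝ} {s : Set ℝ}

lemma congr_coeff (h : SolvesOn q y d s) {q' : ℝ → ℝ} (hq : ∀ x ∈ s, q x = q' x) :
    SolvesOn q' y d s :=
  fun x hx => ⟨(h x hx).1, hq x hx ▸ (h x hx).2⟩

lemma const_mul (h : SolvesOn q y d s) (k : ℝ) :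
    SolvesOn q (fun x => k * y x) (fun x => k * d x) s :=
  fun x hx => ⟨(h x hx).1.const_mul k, ((h x hx).2.const_mul k).congr_deriv (by ring)⟩

lemma continuousOn_inv_sq (h : SolvesOn q y d s) (hy : ∀ x ∈ s, y x ≠ 0) :
    ContinuousOn (fun t => (y t ^ 2)⁻¹) s := fun t ht =>
  (((h t ht).1.continuousAt.pow 2).inv₀ (pow_ne_zero 2 (hy t ht))).continuousWithinAt

lemma reductionOfOrder {α β a : ℝ} (h : SolvesOn q y d (Ioo α β)) (hy : ∀ x ∈ Ioo α β, y x ≠ 0)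
    (ha : a ∈ Ioo α β) :
    SolvesOn q (fun x => y x * ∫ t in x..a, (y t ^ 2)⁻¹)
      (fun x => d x * (∫ t in x..a, (y t ^ 2)⁻¹) - (y x)⁻¹) (Ioo α β) := by
  have hcont := h.continuousOn_inv_sq hy
  intro x hx
  have hI : HasDerivAt (fun x => ∫ t in x..a, (y t ^ 2)⁻¹) (-(y x ^ 2)⁻¹) x :=
    integral_hasDerivAt_left
      ((hcont.mono (ordConnected_Ioo.uIcc_subset hx ha)).intervalIntegrable)
      (hcont.stronglyMeasurableAtFilter isOpen_Ioo x hx)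
      (hcont.continuousAt (isOpen_Ioo.mem_nhds hx))
  have hyx := hy x hx
  obtain ⟨hy', hd'⟩ := h x hx
  refine ⟨(hy'.mul hI).congr_deriv ?_, ((hd'.mul hI).sub (hy'.inv hyx)).congr_deriv ?_⟩
  · field_simp
    ring
  · field_simp
    ring

lemma integral_inv_sq_pos {α β x a : ℝ} (h : SolvesOn q y d (Ioo α β))
    (hy : ∀ x ∈ Ioo α β, y x ≠ 0) (hx : x ∈ Ioo α β) (ha : a ∈ Ioo α β) (hxa : x < a) :
    0 < ∫ t in x..a, (y t ^ 2)⁻¹ :=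
  intervalIntegral_pos_of_pos_on ((h.continuousOn_inv_sq hy).mono
    (ordConnected_Ioo.uIcc_subset hx ha)).intervalIntegrable
    (fun t ht => inv_pos.2 (sq_pos_of_ne_zero
      (hy t (ordConnected_Ioo.out hx ha (Ioo_subset_Icc_self ht))))) hxa

end SolvesOn

lemma solvesOn_pow_mul {l : ℕ} {p U V : ℝ → ℝ} {s : Set ℝ} (hs : s ⊆ Ioi 0)
    (h : ∀ x ∈ s, HasDerivAt U (V x / x ^ (2 * l + 2)) x ∧
      HasDerivAt V (x ^ (2 * l + 2) * p x * U x) x) :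
    SolvesOn (fun x => l * (l + 1) / x ^ 2 + p x) (fun x => x ^ (l + 1) * U x)
      (fun x => (l + 1) * x ^ l * U x + V x / x ^ (l + 1)) s := by
  intro x hx
  have hx0 : x ≠ 0 := (hs hx).ne'
  obtain ⟨hU, hV⟩ := h x hx
  refine ⟨((hasDerivAt_pow (l + 1) x).mul hU).congr_deriv ?_,
    ((((hasDerivAt_pow l x).const_mul ((l : ℝ) + 1)).mul hU).add
      (hV.div (hasDerivAt_pow (l + 1) x) (pow_ne_zero _ hx0))).congr_deriv ?_⟩
  · push_cast
    field_simp
    ring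
  · rcases l with _ | l
    · field_simp
      ring
    · push_cast
      field_simp
      ring

lemma mul_sq_le_mul_sq_of_abs_sub_le {U : ℝ → ℝ} {κ δ t : ℝ}
    (hUκ : ∀ t ∈ Ioc 0 δ, |U t - 1| ≤ κ * t ^ 2) (ht : t ∈ Ioc 0 δ) : κ * t ^ 2 ≤ κ * δ ^ 2 := by
  have hδ : 0 < δ := ht.1.trans_le ht.2
  have hκ : 0 ≤ κ := nonneg_of_mul_nonneg_left
    ((abs_nonneg _).trans (hUκ δ ⟨hδ, le_rfl⟩)) (pow_pos hδ 2)
  exact mul_le_mul_of_nonneg_left (pow_le_pow_left₀ ht.1.le ht.2 2) hκ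

lemma abs_integral_inv_sq_sub_le {l : ℕ} (hl : 1 ≤ l) {U : ℝ → ℝ} {κ δ x : ℝ}
    (hκ : κ * δ ^ 2 ≤ 1 / 2) (hU : ContinuousOn U (Ioc 0 δ))
    (hUκ : ∀ t ∈ Ioc 0 δ, |U t - 1| ≤ κ * t ^ 2) (hx : x ∈ Ioc 0 δ) :
    |(∫ t in x..δ, ((t ^ (l + 1) * U t) ^ 2)⁻¹) -
        ((x ^ (2 * l + 1))⁻¹ - (δ ^ (2 * l + 1))⁻¹) / (2 * l + 1)| ≤
      10 * κ * (x ^ (2 * l - 1))⁻¹ := by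
  obtain ⟨hx0, hxδ⟩ := hx
  have hsub : uIcc x δ ⊆ Ioc 0 δ := by
    rw [uIcc_of_le hxδ]; exact fun t ht => ⟨hx0.trans_le ht.1, ht.2⟩
  have hκ0 : 0 ≤ κ :=
    nonneg_of_mul_nonneg_left ((abs_nonneg _).trans (hUκ x ⟨hx0, hxδ⟩)) (pow_pos hx0 2)
  have hκt : ∀ t ∈ Ioc 0 δ, κ * t ^ 2 ≤ 1 / 2 := fun t ht =>
    (mul_sq_le_mul_sq_of_abs_sub_le hUκ ht).trans hκ
  have hA : IntervalIntegrable (fun t => ((t ^ (l + 1) * U t) ^ 2)⁻¹) volume x δ := by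
    refine ContinuousOn.intervalIntegrable
      ((((continuousOn_pow _).mul (hU.mono hsub)).pow 2).inv₀ fun t ht => ?_)
    have := abs_le.mp ((hUκ t (hsub ht)).trans (hκt t (hsub ht)))
    exact pow_ne_zero 2 (mul_ne_zero (pow_ne_zero _ (hsub ht).1.ne') (by linarith))
  have hB : ∀ m : ℕ, IntervalIntegrable (fun t : ℝ => (t ^ m)⁻¹) volume x δ := fun m =>
    ContinuousOn.intervalIntegrable ((continuousOn_pow m).inv₀ fun t ht =>
      pow_ne_zero m (hsub ht).1.ne')
  have hE : ∀ t ∈ Ioc x δ, ‖((t ^ (l + 1) * U t) ^ 2)⁻¹ - (t ^ (2 * l + 1 + 1))⁻¹‖ ≤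
      10 * κ * (t ^ (2 * l - 1 + 1))⁻¹ := by
    intro t ht
    have ht0 : 0 < t := hx0.trans ht.1
    have htδ : t ∈ Ioc 0 δ := ⟨ht0, ht.2⟩
    rw [Real.norm_eq_abs, show 2 * l - 1 + 1 = 2 * l by omega,
      show ((t ^ (l + 1) * U t) ^ 2)⁻¹ - (t ^ (2 * l + 1 + 1))⁻¹ =
        (t ^ (2 * l + 2))⁻¹ * ((U t ^ 2)⁻¹ - 1) by ring, abs_mul,
      abs_of_pos (by positivity)]
    calc (t ^ (2 * l + 2))⁻¹ * |(U t ^ 2)⁻¹ - 1| ≤ (t ^ (2 * l + 2))⁻¹ * (10 * (κ * t ^ 2)) :=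
          mul_le_mul_of_nonneg_left (abs_inv_sq_sub_one_le (hκt t htδ) (hUκ t htδ))
            (by positivity)
      _ = 10 * κ * (t ^ (2 * l))⁻¹ := by field_simp; ring
  have hmain := integral_inv_pow_succ (m := 2 * l + 1) (by omega) hx0 hxδ
  push_cast at hmain
  have hxδ' : (δ ^ (2 * l - 1))⁻¹ ≤ (x ^ (2 * l - 1))⁻¹ :=
    inv_anti₀ (pow_pos hx0 _) (pow_le_pow_left₀ hx0.le hxδ _)
  rw [← hmain, ← integral_sub hA (hB _)]
  calc |∫ t in x..δ, (((t ^ (l + 1) * U t) ^ 2)⁻¹ - (t ^ (2 * l + 1 + 1))⁻¹)|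
      ≤ ∫ t in x..δ, 10 * κ * (t ^ (2 * l - 1 + 1))⁻¹ :=
        norm_integral_le_of_norm_le hxδ (ae_of_all _ hE) ((hB _).const_mul _)
    _ = 10 * κ * (((x ^ (2 * l - 1))⁻¹ - (δ ^ (2 * l - 1))⁻¹) / (2 * l - 1 : ℕ)) := by
        rw [intervalIntegral.integral_const_mul, integral_inv_pow_succ (by omega) hx0 hxδ]
    _ ≤ 10 * κ * (x ^ (2 * l - 1))⁻¹ := by
        gcongr
        exact (div_le_self (sub_nonneg.2 hxδ') (by norm_cast; omega)).trans
          (sub_le_self _ (inv_nonneg.2 (pow_nonneg (hx0.le.trans hxδ) _)))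

lemma abs_reduction_sub_one_le {l : ℕ} (hl : 1 ≤ l) {U : ℝ → ℝ} {κ δ : ℝ}
    (hκ : κ * δ ^ 2 ≤ 1 / 2) (hU : ContinuousOn U (Ioc 0 δ))
    (hUκ : ∀ t ∈ Ioc 0 δ, |U t - 1| ≤ κ * t ^ 2) {x : ℝ} (hx : x ∈ Ioc 0 δ) :
    |(2 * l + 1) * x ^ (2 * l + 1) * U x * (∫ t in x..δ, ((t ^ (l + 1) * U t) ^ 2)⁻¹) - 1| ≤
      (κ * (30 * l + 16) + 3 / (2 * δ ^ 2)) * x ^ 2 := by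
  obtain ⟨hx0, hxδ⟩ := hx
  have hδ : 0 < δ := hx0.trans_le hxδ
  have hU1 := hUκ x ⟨hx0, hxδ⟩
  have hUx : |U x| ≤ 3 / 2 := by
    have := (mul_sq_le_mul_sq_of_abs_sub_le hUκ ⟨hx0, hxδ⟩).trans hκ
    have := abs_sub_abs_le_abs_sub (U x) 1
    rw [abs_one] at this
    linarith
  have hD := abs_integral_inv_sq_sub_le hl hκ hU hUκ ⟨hx0, hxδ⟩
  set D := (∫ t in x..δ, ((t ^ (l + 1) * U t) ^ 2)⁻¹) -
    ((x ^ (2 * l + 1))⁻¹ - (δ ^ (2 * l + 1))⁻¹) / (2 * l + 1) with hD_def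
  have hratio : x ^ (2 * l + 1) * (δ ^ (2 * l + 1))⁻¹ ≤ x ^ 2 / δ ^ 2 := by
    rw [← div_eq_mul_inv, ← div_pow, ← div_pow]
    exact pow_le_pow_of_le_one (by positivity) (div_le_one_of_le₀ hxδ hδ.le) (by omega)
  have hpow : x ^ (2 * l + 1) * (x ^ (2 * l - 1))⁻¹ = x ^ 2 := by
    rw [show 2 * l + 1 = 2 * l - 1 + 2 by omega, pow_add]
    field_simp
  have hsplit : (2 * l + 1) * x ^ (2 * l + 1) * U x * (∫ t in x..δ, ((t ^ (l + 1) * U t) ^ 2)⁻¹)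
      - 1 = (U x - 1) - U x * (x ^ (2 * l + 1) * (δ ^ (2 * l + 1))⁻¹) +
        (2 * l + 1) * U x * x ^ (2 * l + 1) * D := by
    rw [hD_def]
    field_simp
    ring
  have hXD : x ^ (2 * l + 1) * |D| ≤ 10 * κ * x ^ 2 :=
    calc x ^ (2 * l + 1) * |D| ≤ x ^ (2 * l + 1) * (10 * κ * (x ^ (2 * l - 1))⁻¹) := by gcongr
      _ = 10 * κ * x ^ 2 := by rw [← hpow]; ring
  have hl0 : (0 : ℝ) ≤ 2 * l + 1 := by positivity
  rw [hsplit]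
  calc _ ≤ |U x - 1| + |U x| * (x ^ (2 * l + 1) * (δ ^ (2 * l + 1))⁻¹) +
        (2 * l + 1) * |U x| * (x ^ (2 * l + 1) * |D|) := by
        refine (abs_add_le _ _).trans (add_le_add ((abs_sub _ _).trans_eq ?_) (le_of_eq ?_))
        · rw [abs_mul, abs_of_nonneg (by positivity : 0 ≤ x ^ (2 * l + 1) * (δ ^ (2 * l + 1))⁻¹)]
        · rw [abs_mul, abs_mul, abs_mul, abs_of_nonneg hl0,
            abs_of_nonneg (pow_nonneg hx0.le (2 * l + 1)), mul_assoc]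
    _ ≤ κ * x ^ 2 + 3 / 2 * (x ^ 2 / δ ^ 2) + (2 * l + 1) * (3 / 2) * (10 * κ * x ^ 2) := by
        gcongr
    _ = (κ * (30 * l + 16) + 3 / (2 * δ ^ 2)) * x ^ 2 := by
        field_simp
        ring

lemma exists_pos_le_mul_sq_le_half {δ₀ κ : ℝ} (hδ₀ : 0 < δ₀) (hκ : 0 ≤ κ) :
    ∃ b, 0 < b ∧ b ≤ δ₀ ∧ κ * b ^ 2 ≤ 1 / 2 := by
  refine ⟨min δ₀ (1 / (2 * κ + 2)), by positivity, min_le_left _ _, ?_⟩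
  have hb := min_le_right δ₀ (1 / (2 * κ + 2))
  have hb0 : 0 < min δ₀ (1 / (2 * κ + 2)) := by positivity
  rw [le_div_iff₀ (by positivity)] at hb
  nlinarith

theorem exists_regular_solution (l : ℕ) {ω : ℝ → ℝ} {b M : ℝ} (hb : 0 < b)
    (hMb : l * (l + 1) * M * b ^ 2 ≤ 1) (hω : ContinuousOn ω (Ioc 0 b))
    (hωb : ∀ x ∈ Ioc 0 b, |ω x| ≤ M * x ^ 2) :
    ∃ U d : ℝ → ℝ, ContinuousOn U (Ioo 0 b) ∧
      SolvesOn (fun x => l * (l + 1) / x ^ 2 * (1 + ω x)) (fun x => x ^ (l + 1) * U x) d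
        (Ioo 0 b) ∧
      ∀ x ∈ Ioc 0 b, |U x - 1| ≤ l * (l + 1) * M * x ^ 2 := by
  have hp : ContinuousOn (fun x => l * (l + 1) * ω x / x ^ 2) (Ioc 0 b) :=
    (continuousOn_const.mul hω).div (continuousOn_pow 2) fun x hx => pow_ne_zero 2 hx.1.ne'
  have hP : ∀ x ∈ Ioc 0 b, |l * (l + 1) * ω x / x ^ 2| ≤ l * (l + 1) * M := fun x hx => by
    rw [abs_div, abs_mul, abs_of_nonneg (by positivity : (0 : ℝ) ≤ l * (l + 1)),
      abs_of_pos (pow_pos hx.1 2), div_le_iff₀ (pow_pos hx.1 2), mul_assoc _ M]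
    exact mul_le_mul_of_nonneg_left (hωb x hx) (by positivity)
  obtain ⟨U, V, hUV, hU⟩ := Volterra.exists_solution (n := 2 * l + 2) hb hMb hp hP
  refine ⟨U, _, fun x hx => (hUV x hx).1.continuousAt.continuousWithinAt,
    (solvesOn_pow_mul (fun x hx => hx.1) hUV).congr_coeff fun x _ => by ring,
    fun x hx => hU x (Ioc_subset_Icc_self hx)⟩

lemma pos_of_abs_sub_one_le {U : ℝ → ℝ} {κ b x : ℝ}
    (hU : ∀ t ∈ Ioc 0 b, |U t - 1| ≤ κ * t ^ 2) (hκb : κ * b ^ 2 ≤ 1 / 2) (hx : x ∈ Ioc 0 b) :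
    0 < U x := by
  have := (hU x hx).trans ((mul_sq_le_mul_sq_of_abs_sub_le hU hx).trans hκb)
  linarith [abs_le.mp this]

theorem exists_singular_solution {l : ℕ} (hl : 1 ≤ l) {q U d : ℝ → ℝ} {κ b δ : ℝ}
    (h : SolvesOn q (fun x => x ^ (l + 1) * U x) d (Ioo 0 b)) (hUc : ContinuousOn U (Ioo 0 b))
    (hU : ∀ x ∈ Ioc 0 b, |U x - 1| ≤ κ * x ^ 2) (hκb : κ * b ^ 2 ≤ 1 / 2) (hδ : δ ∈ Ioo 0 b) :
    ∃ y d₂ : ℝ → ℝ, SolvesOn q y d₂ (Ioo 0 b) ∧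
      (∀ x ∈ Ioc 0 δ, |x ^ l * y x - 1| ≤ (κ * (30 * l + 16) + 3 / (2 * δ ^ 2)) * x ^ 2) ∧
      y δ = 0 ∧ y (δ / 2) ≠ 0 := by
  have hy : ∀ x ∈ Ioo 0 b, 0 < x ^ (l + 1) * U x := fun x hx =>
    mul_pos (pow_pos hx.1 _) (pos_of_abs_sub_one_le hU hκb (Ioo_subset_Ioc_self hx))
  have hsub : Ioc 0 δ ⊆ Ioo 0 b := fun x hx => ⟨hx.1, hx.2.trans_lt hδ.2⟩
  have hδ2 : δ / 2 ∈ Ioo 0 b := ⟨by linarith [hδ.1], by linarith [hδ.1, hδ.2]⟩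
  refine ⟨_, _, (h.reductionOfOrder (fun x hx => (hy x hx).ne') hδ).const_mul (2 * l + 1),
    fun x hx => ?_, by simp, ?_⟩
  · have := abs_reduction_sub_one_le hl
      ((mul_sq_le_mul_sq_of_abs_sub_le hU ⟨hδ.1, hδ.2.le⟩).trans hκb)
      (hUc.mono hsub) (fun t ht => hU t ⟨ht.1, (hsub ht).2.le⟩) hx
    convert this using 2
    ring
  · exact (mul_pos (by positivity) (mul_pos (hy _ hδ2) (h.integral_inv_sq_pos
      (fun x hx => (hy x hx).ne') hδ2 hδ (by linarith [hδ.1])))).ne'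

lemma eq_zero_and_eq_zero_of_mul_add_mul {f g : ℝ → ℝ} {s : Set ℝ} {x₀ x₁ : ℝ} (hx₀ : x₀ ∈ s)
    (hx₁ : x₁ ∈ s) (hf : f x₀ ≠ 0) (hg₀ : g x₀ = 0) (hg₁ : g x₁ ≠ 0) {a b : ℝ}
    (h : ∀ x ∈ s, a * f x + b * g x = 0) : a = 0 ∧ b = 0 := by
  have ha : a = 0 := by simpa [hg₀, hf] using h x₀ hx₀
  exact ⟨ha, by simpa [ha, hg₁] using h x₁ hx₁⟩

/-- near the center, the Liouville normal form
`y'' = (l(l+1)/x²)(1+ω(x))y` with `|ω(x)| ≤ M x²` possesses two linearly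
independent twice continuously differentiable solutions `y₁ ∼ x^{l+1}` and
`y₂ ∼ x^{−l}` with quantitative error bounds `O(x²)`. -/
theorem statement_15 (l : ℕ) (hl : 1 ≤ l) (δ₀ M : ℝ) (hδ₀ : 0 < δ₀) (hM : 0 < M)
    (ω : ℝ → ℝ) (hω : ContinuousOn ω (Set.Ioc 0 δ₀))
    (hωb : ∀ x ∈ Set.Ioc (0 : ℝ) δ₀, |ω x| ≤ M * x ^ 2) :
    ∃ δ ∈ Set.Ioc (0 : ℝ) δ₀, ∃ C > 0, ∃ y₁ y₂ d₁ d₂ : ℝ → ℝ,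
      (∀ x ∈ Set.Ioc (0 : ℝ) δ, HasDerivAt y₁ (d₁ x) x) ∧
      (∀ x ∈ Set.Ioc (0 : ℝ) δ,
        HasDerivAt d₁ (((l * (l + 1) : ℕ) : ℝ) / x ^ 2 * (1 + ω x) * y₁ x) x) ∧
      (∀ x ∈ Set.Ioc (0 : ℝ) δ, HasDerivAt y₂ (d₂ x) x) ∧
      (∀ x ∈ Set.Ioc (0 : ℝ) δ,
        HasDerivAt d₂ (((l * (l + 1) : ℕ) : ℝ) / x ^ 2 * (1 + ω x) * y₂ x) x) ∧
      (∀ x ∈ Set.Ioc (0 : ℝ) δ, |y₁ x / x ^ (l + 1) - 1| ≤ C * x ^ 2) ∧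
      (∀ x ∈ Set.Ioc (0 : ℝ) δ, |x ^ l * y₂ x - 1| ≤ C * x ^ 2) ∧
      (∀ a b : ℝ, (∀ x ∈ Set.Ioc (0 : ℝ) δ, a * y₁ x + b * y₂ x = 0) →
        a = 0 ∧ b = 0) := by
  rw [show ((l * (l + 1) : ℕ) : ℝ) = l * (l + 1) by push_cast; ring]
  have hκ : 0 ≤ (l * (l + 1) * M : ℝ) := by positivity
  obtain ⟨b, hb, hbδ₀, hκb⟩ := exists_pos_le_mul_sq_le_half hδ₀ hκ
  obtain ⟨U, d₁, hUc, h₁, hU⟩ := exists_regular_solution l hb (by linarith)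
    (hω.mono (Ioc_subset_Ioc_right hbδ₀)) fun x hx => hωb x ⟨hx.1, hx.2.trans hbδ₀⟩
  obtain ⟨δ, hδ, hδb⟩ : ∃ δ, 0 < δ ∧ δ < b := ⟨b / 2, by positivity, by linarith⟩
  obtain ⟨y₂, d₂, h₂, hy₂, hy₂δ, hy₂δ2⟩ := exists_singular_solution hl h₁ hUc hU hκb ⟨hδ, hδb⟩
  have hsub : Ioc 0 δ ⊆ Ioo 0 b := fun x hx => ⟨hx.1, hx.2.trans_lt hδb⟩
  refine ⟨δ, ⟨hδ, by linarith⟩, l * (l + 1) * M * (30 * l + 16) + 3 / (2 * δ ^ 2),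
    by positivity, _, y₂, d₁, d₂, fun x hx => (h₁ x (hsub hx)).1, fun x hx => (h₁ x (hsub hx)).2,
    fun x hx => (h₂ x (hsub hx)).1, fun x hx => (h₂ x (hsub hx)).2, fun x hx => ?_, hy₂,
    fun a a' => eq_zero_and_eq_zero_of_mul_add_mul (s := Ioc 0 δ) ⟨hδ, le_rfl⟩
      ⟨by positivity, by linarith⟩
      (mul_pos (pow_pos hδ _) (pos_of_abs_sub_one_le hU hκb ⟨hδ, hδb.le⟩)).ne' hy₂δ hy₂δ2⟩
  rw [mul_div_cancel_left₀ _ (pow_ne_zero _ hx.1.ne')]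
  refine (hU x ⟨hx.1, (hsub hx).2.le⟩).trans (mul_le_mul_of_nonneg_right ?_ (sq_nonneg x))
  have hl16 : (1 : ℝ) ≤ 30 * l + 16 := by linarith [(Nat.cast_nonneg l : (0 : ℝ) ≤ l)]
  have : (0 : ℝ) ≤ 3 / (2 * δ ^ 2) := by positivity
  nlinarith [mul_le_mul_of_nonneg_left hl16 hκ]
end
end

section
/- Let l ≥ 1 be an integer, δ > 0, and let ω : (0,δ] → ℝ be continuous with |ω(x)| ≤ M x² for all x ∈ (0,δ]. Then the set of solutions y : (0,δ] → ℝ of the ordinary differential equation y''(x) = (l(l+1)/x²)(1 + ω(x)) y(x) that satisfy ∫_0^δ |y(x)|² dx < ∞ forms a real vector space of dimension at most one. (Consequently the eigenvalues of the operator 𝒩_{l00} are simple for l ≥ 1.) -/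
/-!
The Wronskian `W = y z' - z y'` of two solutions is constant, and solutions with `W = 0` are
proportional by uniqueness for the initial value problem. If `W = c ≠ 0`, then `u = y² + z²`
satisfies `u'' ≥ 2u/x²` near `0` (because `x²Q(x) → l(l+1) ≥ 2`), so integrability of `u` forces
`u = O(x²)`; Lagrange's identity `c² ≤ u (y'² + z'²)` then gives `u'' ≥ 2c²/(Cx²)`, so that
`u ≳ log(1/x)` blows up at `0`, a contradiction.
-/

open MeasureTheory Real Filter Set Topology

theorem Convex.monotoneOn_of_hasDerivAt_nonneg {D : Set ℝ} (hD : Convex ℝ D) {f f' : ℝ → ℝ}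
    (hf : ∀ x ∈ D, HasDerivAt f (f' x) x) (hf' : ∀ x ∈ D, 0 ≤ f' x) : MonotoneOn f D :=
  monotoneOn_of_hasDerivWithinAt_nonneg hD (fun x hx => (hf x hx).continuousAt.continuousWithinAt)
    (fun x hx => (hf x (interior_subset hx)).hasDerivWithinAt)
    (fun x hx => hf' x (interior_subset hx))

theorem Convex.antitoneOn_of_hasDerivAt_nonpos {D : Set ℝ} (hD : Convex ℝ D) {f f' : ℝ → ℝ}
    (hf : ∀ x ∈ D, HasDerivAt f (f' x) x) (hf' : ∀ x ∈ D, f' x ≤ 0) : AntitoneOn f D :=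
  antitoneOn_of_hasDerivWithinAt_nonpos hD (fun x hx => (hf x hx).continuousAt.continuousWithinAt)
    (fun x hx => (hf x (interior_subset hx)).hasDerivWithinAt)
    (fun x hx => hf' x (interior_subset hx))

/-- `(u/x² - c/(3x³))' = (x²u' - 2xu + c)/x⁴ ≤ 0`, so `u ≥ c/(3x) - O(1)`. -/
theorem not_integrableOn_of_sq_mul_deriv_sub_le {u du : ℝ → ℝ} {a c : ℝ} (ha : 0 < a)
    (hc : 0 < c) (hu : ∀ x ∈ Ioc 0 a, HasDerivAt u (du x) x)
    (hw : ∀ x ∈ Ioc 0 a, x ^ 2 * du x - 2 * x * u x ≤ -c) : ¬IntegrableOn u (Ioo 0 a) := by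
  set g : ℝ → ℝ := fun x => u x / x ^ 2 - c / 3 * (x ^ 3)⁻¹
  have hg : ∀ x ∈ Ioc 0 a,
      HasDerivAt g ((x ^ 2 * du x - 2 * x * u x + c) / x ^ 4) x := fun x hx => by
    have hx₀ : x ≠ 0 := hx.1.ne'
    refine (((hu x hx).div (hasDerivAt_pow 2 x) (pow_ne_zero 2 hx₀)).sub
      (((hasDerivAt_pow 3 x).inv (pow_ne_zero 3 hx₀)).const_mul (c / 3))).congr_deriv ?_
    field_simp
    ring
  have hanti : AntitoneOn g (Ioc 0 a) := (convex_Ioc 0 a).antitoneOn_of_hasDerivAt_nonpos hg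
    fun x hx => div_nonpos_of_nonpos_of_nonneg (by linarith [hw x hx]) (by positivity)
  have hlower : ∀ x ∈ Ioo 0 a, c / 3 * x⁻¹ ≤ u x + |g a| * a ^ 2 := fun x hx => by
    have hx₀ : x ≠ 0 := hx.1.ne'
    have hgx : g a ≤ g x := hanti ⟨hx.1, hx.2.le⟩ ⟨ha, le_rfl⟩ hx.2.le
    have hux : u x = x ^ 2 * g x + c / 3 * x⁻¹ := by
      simp only [g]
      field_simp
      ring
    have hx2 : x ^ 2 ≤ a ^ 2 := pow_le_pow_left₀ hx.1.le hx.2.le 2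
    nlinarith [neg_abs_le (g a), abs_nonneg (g a), sq_nonneg x]
  intro hint
  have hinv : IntegrableOn (fun x : ℝ => x⁻¹) (Ioo 0 a) := by
    have hbound : IntegrableOn (fun x => u x + |g a| * a ^ 2) (Ioo 0 a) :=
      hint.add (integrableOn_const (by simp))
    refine Integrable.mono' (hbound.const_mul (3 / c))
      measurable_inv.aestronglyMeasurable ?_
    filter_upwards [ae_restrict_mem measurableSet_Ioo] with x hx
    rw [Real.norm_eq_abs, abs_of_pos (inv_pos.mpr hx.1)]
    have := hlower x hx
    calc x⁻¹ = 3 / c * (c / 3 * x⁻¹) := by field_simp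
      _ ≤ 3 / c * (u x + |g a| * a ^ 2) := by gcongr
  rw [← integrableOn_Ioc_iff_integrableOn_Ioo, ← intervalIntegrable_iff_integrableOn_Ioc_of_le
    ha.le, intervalIntegrable_inv_iff] at hinv
  simp [ha.ne, ha.le] at hinv

/-- The Wronskian `x²u' - 2xu` of `u` and the solution `x²` of `u'' = 2u/x²` is nondecreasing, and
it cannot become negative without forcing `u ≳ 1/x`. -/
theorem monotoneOn_div_sq_of_integrableOn {u du ddu : ℝ → ℝ} {b : ℝ}
    (hu : ∀ x ∈ Ioc 0 b, HasDerivAt u (du x) x) (hdu : ∀ x ∈ Ioc 0 b, HasDerivAt du (ddu x) x)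
    (hsub : ∀ x ∈ Ioc 0 b, 2 * u x ≤ x ^ 2 * ddu x) (hint : IntegrableOn u (Ioo 0 b)) :
    MonotoneOn (fun x => u x / x ^ 2) (Ioc 0 b) := by
  set w : ℝ → ℝ := fun x => x ^ 2 * du x - 2 * x * u x
  have hw : ∀ x ∈ Ioc 0 b, HasDerivAt w (x ^ 2 * ddu x - 2 * u x) x := fun x hx =>
    (((hasDerivAt_pow 2 x).mul (hdu x hx)).sub
      (((hasDerivAt_id x).const_mul 2).mul (hu x hx))).congr_deriv (by simp; ring)
  have hw_mono : MonotoneOn w (Ioc 0 b) :=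
    (convex_Ioc 0 b).monotoneOn_of_hasDerivAt_nonneg hw fun x hx => by linarith [hsub x hx]
  have hw_nonneg : ∀ x ∈ Ioc 0 b, 0 ≤ w x := by
    by_contra! ⟨a, ha, hwa⟩
    refine not_integrableOn_of_sq_mul_deriv_sub_le ha.1 (neg_pos.mpr hwa)
      (fun x hx => hu x ⟨hx.1, hx.2.trans ha.2⟩) (fun x hx => ?_)
      (hint.mono_set (Ioo_subset_Ioo_right ha.2))
    exact (hw_mono ⟨hx.1, hx.2.trans ha.2⟩ ha hx.2).trans_eq (neg_neg _).symm
  refine (convex_Ioc 0 b).monotoneOn_of_hasDerivAt_nonneg (f' := fun x => w x / x ^ 4)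
    (fun x hx => ((hu x hx).div (hasDerivAt_pow 2 x) (pow_ne_zero 2 hx.1.ne')).congr_deriv ?_)
    fun x hx => div_nonneg (hw_nonneg x hx) (by positivity)
  have hx₀ : x ≠ 0 := hx.1.ne'
  simp only [w]
  field_simp
  ring

/-- Since `(u + K log x)'' ≥ 0`, the function `u + K log x` lies above a tangent line, so
`u ≥ A - K log x` blows up at `0`. -/
theorem not_bddAbove_of_div_sq_le_deriv2 {u du ddu : ℝ → ℝ} {b K : ℝ} (hb : 0 < b) (hK : 0 < K)
    (hu : ∀ x ∈ Ioc 0 b, HasDerivAt u (du x) x) (hdu : ∀ x ∈ Ioc 0 b, HasDerivAt du (ddu x) x)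
    (hddu : ∀ x ∈ Ioc 0 b, K / x ^ 2 ≤ ddu x) : ¬BddAbove (u '' Ioc 0 b) := by
  set dg : ℝ → ℝ := fun x => du x + K * x⁻¹
  have hdg_mono : MonotoneOn dg (Ioc 0 b) :=
    (convex_Ioc 0 b).monotoneOn_of_hasDerivAt_nonneg
      (fun x hx => (hdu x hx).add ((hasDerivAt_inv hx.1.ne').const_mul K))
      fun x hx => by
        have := hddu x hx
        rw [mul_neg, ← div_eq_mul_inv]
        linarith
  set h : ℝ → ℝ := fun x => u x + K * log x - dg b * x
  have hh_anti : AntitoneOn h (Ioc 0 b) :=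
    (convex_Ioc 0 b).antitoneOn_of_hasDerivAt_nonpos (f' := fun x => dg x - dg b)
      (fun x hx => (((hu x hx).add ((hasDerivAt_log hx.1.ne').const_mul K)).sub
        ((hasDerivAt_id x).const_mul (dg b))).congr_deriv (by simp [dg]))
      fun x hx => by linarith [hdg_mono hx ⟨hb, le_rfl⟩ hx.2]
  rintro ⟨B, hB⟩
  have hlog : ∀ᶠ x in 𝓝[>] 0, K * log x < h b - |dg b| * b - B :=
    (tendsto_log_nhdsGT_zero.const_mul_atBot hK).eventually_lt_atBot _
  obtain ⟨x, hx, hxlog⟩ := (Filter.Eventually.and (Ioc_mem_nhdsGT hb) hlog).exists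
  have hhx : h b ≤ h x := hh_anti hx ⟨hb, le_rfl⟩ hx.2
  have hux : u x ≤ B := hB (mem_image_of_mem u hx)
  have hdgx : -(|dg b| * b) ≤ dg b * x :=
    calc -(|dg b| * b) ≤ -(|dg b| * x) := by nlinarith [abs_nonneg (dg b), hx.2]
      _ ≤ dg b * x := by nlinarith [neg_abs_le (dg b), hx.1]
  simp only [h] at hhx
  linarith

theorem exists_one_le_sq_mul_potential {n δ M : ℝ} {ω : ℝ → ℝ} (hn : 2 ≤ n) (hδ : 0 < δ)
    (hω : ∀ x ∈ Ioc 0 δ, |ω x| ≤ M * x ^ 2) :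
    ∃ b ∈ Ioc 0 δ, ∀ x ∈ Ioc 0 b, 1 ≤ x ^ 2 * (n / x ^ 2 * (1 + ω x)) := by
  have hsmall : ∀ᶠ x in 𝓝[>] (0 : ℝ), M * x ^ 2 < 1 / 2 := by
    have : Tendsto (fun x : ℝ => M * x ^ 2) (𝓝[>] 0) (𝓝 0) :=
      ((continuous_const.mul (continuous_pow 2)).tendsto' 0 0 (by simp)).mono_left
        nhdsWithin_le_nhds
    exact this.eventually (gt_mem_nhds (by norm_num))
  obtain ⟨a, ha, hsub⟩ := mem_nhdsGT_iff_exists_Ioc_subset.mp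
    (Filter.Eventually.and (Ioc_mem_nhdsGT hδ) hsmall)
  refine ⟨min a δ, ⟨lt_min ha hδ, min_le_right _ _⟩, fun x hx => ?_⟩
  obtain ⟨hxδ, hxM⟩ := hsub ⟨hx.1, hx.2.trans (min_le_left _ _)⟩
  have hω_ge : -(1 / 2) ≤ ω x := (abs_le.mp ((hω x hxδ).trans hxM.le)).1
  rw [← mul_assoc, mul_div_cancel₀ _ (pow_ne_zero 2 hx.1.ne')]
  nlinarith

def SolvesLiouvilleOn (Q : ℝ → ℝ) (s : Set ℝ) (y dy : ℝ → ℝ) : Prop :=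
  ∀ x ∈ s, HasDerivAt y (dy x) x ∧ HasDerivAt dy (Q x * y x) x

namespace SolvesLiouvilleOn

variable {Q y dy z dz : ℝ → ℝ} {s t : Set ℝ}

theorem mono (hy : SolvesLiouvilleOn Q s y dy) (hts : t ⊆ s) : SolvesLiouvilleOn Q t y dy :=
  fun x hx => hy x (hts hx)

theorem linearCombination (hy : SolvesLiouvilleOn Q s y dy) (hz : SolvesLiouvilleOn Q s z dz)
    (a b : ℝ) :
    SolvesLiouvilleOn Q s (fun x => a * y x + b * z x) (fun x => a * dy x + b * dz x) := by
  intro x hx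
  obtain ⟨hy₁, hy₂⟩ := hy x hx
  obtain ⟨hz₁, hz₂⟩ := hz x hx
  exact ⟨(hy₁.const_mul a).add (hz₁.const_mul b),
    ((hy₂.const_mul a).add (hz₂.const_mul b)).congr_deriv (by ring)⟩

theorem wronskian_eq (hy : SolvesLiouvilleOn Q s y dy) (hz : SolvesLiouvilleOn Q s z dz)
    (hs : s.OrdConnected) {x x' : ℝ} (hx : x ∈ s) (hx' : x' ∈ s) :
    y x * dz x - z x * dy x = y x' * dz x' - z x' * dy x' := by
  have hW : ∀ t ∈ s, HasDerivAt (fun t => y t * dz t - z t * dy t) 0 t := fun t ht => by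
    obtain ⟨hy₁, hy₂⟩ := hy t ht
    obtain ⟨hz₁, hz₂⟩ := hz t ht
    exact ((hy₁.mul hz₂).sub (hz₁.mul hy₂)).congr_deriv (by ring)
  have hmono := hs.convex.monotoneOn_of_hasDerivAt_nonneg hW fun _ _ => le_rfl
  have hanti := hs.convex.antitoneOn_of_hasDerivAt_nonpos hW fun _ _ => le_rfl
  rcases le_total x x' with h | h
  · exact le_antisymm (hmono hx hx' h) (hanti hx hx' h)
  · exact le_antisymm (hanti hx' hx h) (hmono hx' hx h)

/-- Uniqueness for the first order system `(y, y')' = (y', Q y)`, whose right-hand side is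
Lipschitz in the state with constant `1 + sup |Q|`. -/
theorem eqOn_zero {a b x₀ : ℝ} (hy : SolvesLiouvilleOn Q (Icc a b) y dy)
    (hQ : ContinuousOn Q (Icc a b)) (hx₀ : x₀ ∈ Icc a b) (hy₀ : y x₀ = 0) (hdy₀ : dy x₀ = 0) :
    EqOn y 0 (Icc a b) := by
  obtain ⟨B, hB⟩ := isCompact_Icc.exists_bound_of_continuousOn hQ
  set v : ℝ → ℝ × ℝ → ℝ × ℝ := fun t p => (p.2, Q t * p.1)
  have hv : ∀ t ∈ Icc a b, LipschitzWith (Real.toNNReal (1 + B)) (v t) := by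
    intro t ht
    refine LipschitzWith.of_dist_le_mul fun p q => ?_
    have hB₀ : 0 ≤ B := (norm_nonneg _).trans (hB t ht)
    have hQt : |Q t| ≤ B := hB t ht
    rw [Real.coe_toNNReal _ (by positivity), Prod.dist_eq, Prod.dist_eq]
    simp only [v, Real.dist_eq]
    refine max_le ?_ ?_
    · nlinarith [le_max_right |p.1 - q.1| |p.2 - q.2|, abs_nonneg (p.2 - q.2)]
    · rw [← mul_sub, abs_mul]
      nlinarith [le_max_left |p.1 - q.1| |p.2 - q.2|, abs_nonneg (p.1 - q.1),
        abs_nonneg (Q t)]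
  set f : ℝ → ℝ × ℝ := fun t => (y t, dy t)
  have hf : ∀ t ∈ Icc a b, HasDerivAt f (v t (f t)) t := fun t ht =>
    (hy t ht).1.prodMk (hy t ht).2
  have hfc : ContinuousOn f (Icc a b) := fun t ht => (hf t ht).continuousAt.continuousWithinAt
  have h0 : ∀ t, HasDerivAt (fun _ => (0 : ℝ × ℝ)) (v t 0) t := fun t =>
    (hasDerivAt_const t (0 : ℝ × ℝ)).congr_deriv (by ext <;> simp [v])
  have hleft : EqOn f 0 (Icc a x₀) :=
    ODE_solution_unique_of_mem_Icc_left (s := fun _ => univ)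
      (fun t ht => (hv t ⟨ht.1.le, ht.2.trans hx₀.2⟩).lipschitzOnWith)
      (hfc.mono (Icc_subset_Icc_right hx₀.2))
      (fun t ht => (hf t ⟨ht.1.le, ht.2.trans hx₀.2⟩).hasDerivWithinAt) (fun _ _ => trivial)
      continuousOn_const (fun t _ => (h0 t).hasDerivWithinAt) (fun _ _ => trivial)
      (Prod.ext hy₀ hdy₀)
  have hright : EqOn f 0 (Icc x₀ b) :=
    ODE_solution_unique_of_mem_Icc_right (s := fun _ => univ)
      (fun t ht => (hv t ⟨hx₀.1.trans ht.1, ht.2.le⟩).lipschitzOnWith)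
      (hfc.mono (Icc_subset_Icc_left hx₀.1))
      (fun t ht => (hf t ⟨hx₀.1.trans ht.1, ht.2.le⟩).hasDerivWithinAt) (fun _ _ => trivial)
      continuousOn_const (fun t _ => (h0 t).hasDerivWithinAt) (fun _ _ => trivial)
      (Prod.ext hy₀ hdy₀)
  intro t ht
  rcases le_total t x₀ with h | h
  · exact congrArg Prod.fst (hleft ⟨ht.1, h⟩)
  · exact congrArg Prod.fst (hright ⟨h, ht.2⟩)

theorem exists_dependent_of_wronskian_eq_zero (hy : SolvesLiouvilleOn Q s y dy)
    (hz : SolvesLiouvilleOn Q s z dz) (hs : s.OrdConnected) (hQ : ContinuousOn Q s)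
    (hW : ∀ x ∈ s, y x * dz x - z x * dy x = 0) :
    ∃ a b : ℝ, ¬(a = 0 ∧ b = 0) ∧ ∀ x ∈ s, a * y x + b * z x = 0 := by
  by_cases hy₀ : ∀ x ∈ s, y x = 0
  · exact ⟨1, 0, by simp, fun x hx => by simp [hy₀ x hx]⟩
  push Not at hy₀
  obtain ⟨x₀, hx₀, hyx₀⟩ := hy₀
  refine ⟨z x₀, -y x₀, fun h => hyx₀ (neg_eq_zero.mp h.2), fun x hx => ?_⟩
  have hsub : uIcc x₀ x ⊆ s := hs.uIcc_subset hx₀ hx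
  exact ((hy.linearCombination hz (z x₀) (-y x₀)).mono hsub).eqOn_zero (hQ.mono hsub)
    left_mem_uIcc (by ring) (by linarith [hW x₀ hx₀]) right_mem_uIcc

theorem hasDerivAt_sq_add_sq (hy : SolvesLiouvilleOn Q s y dy) (hz : SolvesLiouvilleOn Q s z dz)
    {x : ℝ} (hx : x ∈ s) :
    HasDerivAt (fun x => y x ^ 2 + z x ^ 2) (2 * (y x * dy x + z x * dz x)) x :=
  (((hy x hx).1.pow 2).add ((hz x hx).1.pow 2)).congr_deriv (by simp; ring)

theorem hasDerivAt_deriv_sq_add_sq (hy : SolvesLiouvilleOn Q s y dy)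
    (hz : SolvesLiouvilleOn Q s z dz) {x : ℝ} (hx : x ∈ s) :
    HasDerivAt (fun x => 2 * (y x * dy x + z x * dz x))
      (2 * (dy x ^ 2 + dz x ^ 2) + 2 * Q x * (y x ^ 2 + z x ^ 2)) x :=
  ((((hy x hx).1.mul (hy x hx).2).add ((hz x hx).1.mul (hz x hx).2)).const_mul 2).congr_deriv
    (by ring)

theorem monotoneOn_sq_add_sq_div_sq {b : ℝ} (hy : SolvesLiouvilleOn Q (Ioc 0 b) y dy)
    (hz : SolvesLiouvilleOn Q (Ioc 0 b) z dz) (hQ : ∀ x ∈ Ioc 0 b, 1 ≤ x ^ 2 * Q x)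
    (hint : IntegrableOn (fun x => y x ^ 2 + z x ^ 2) (Ioo 0 b)) :
    MonotoneOn (fun x => (y x ^ 2 + z x ^ 2) / x ^ 2) (Ioc 0 b) :=
  monotoneOn_div_sq_of_integrableOn (fun _ hx => hy.hasDerivAt_sq_add_sq hz hx)
    (fun _ hx => hy.hasDerivAt_deriv_sq_add_sq hz hx) (fun x hx => by
      nlinarith [mul_le_mul_of_nonneg_right (hQ x hx)
          (add_nonneg (sq_nonneg (y x)) (sq_nonneg (z x))),
        mul_nonneg (sq_nonneg x) (add_nonneg (sq_nonneg (dy x)) (sq_nonneg (dz x)))]) hint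

theorem wronskian_eq_zero_of_sq_add_sq_le {b C : ℝ} (hb : 0 < b)
    (hy : SolvesLiouvilleOn Q (Ioc 0 b) y dy) (hz : SolvesLiouvilleOn Q (Ioc 0 b) z dz)
    (hQ : ∀ x ∈ Ioc 0 b, 0 ≤ Q x) (hu : ∀ x ∈ Ioc 0 b, y x ^ 2 + z x ^ 2 ≤ C * x ^ 2) :
    y b * dz b - z b * dy b = 0 := by
  set c := y b * dz b - z b * dy b
  by_contra hc
  have hc2 : 0 < c ^ 2 := by positivity
  have hlagrange : ∀ x ∈ Ioc 0 b, c ^ 2 ≤ C * x ^ 2 * (dy x ^ 2 + dz x ^ 2) := fun x hx => by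
    have hW : y x * dz x - z x * dy x = c := hy.wronskian_eq hz ordConnected_Ioc hx ⟨hb, le_rfl⟩
    rw [← hW]
    nlinarith [sq_nonneg (y x * dy x + z x * dz x), mul_le_mul_of_nonneg_right (hu x hx)
      (add_nonneg (sq_nonneg (dy x)) (sq_nonneg (dz x)))]
  have hC : 0 < C := by
    by_contra! hC
    nlinarith [hlagrange b ⟨hb, le_rfl⟩, mul_nonneg (neg_nonneg.mpr hC)
      (mul_nonneg (sq_nonneg b) (add_nonneg (sq_nonneg (dy b)) (sq_nonneg (dz b))))]
  have hddu : ∀ x ∈ Ioc 0 b, 2 * c ^ 2 / C / x ^ 2 ≤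
      2 * (dy x ^ 2 + dz x ^ 2) + 2 * Q x * (y x ^ 2 + z x ^ 2) := fun x hx => by
    have hCx : 0 < C * x ^ 2 := mul_pos hC (pow_pos hx.1 2)
    rw [div_div, div_le_iff₀ hCx]
    nlinarith [hlagrange x hx, mul_nonneg (mul_nonneg (hQ x hx)
      (add_nonneg (sq_nonneg (y x)) (sq_nonneg (z x)))) hCx.le]
  refine not_bddAbove_of_div_sq_le_deriv2 hb (by positivity)
    (fun _ hx => hy.hasDerivAt_sq_add_sq hz hx) (fun _ hx => hy.hasDerivAt_deriv_sq_add_sq hz hx)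
    hddu ⟨C * b ^ 2, ?_⟩
  rintro _ ⟨x, hx, rfl⟩
  exact (hu x hx).trans (by gcongr; exacts [hx.1.le, hx.2])

theorem wronskian_eq_zero_of_integrableOn {b : ℝ} (hb : 0 < b)
    (hy : SolvesLiouvilleOn Q (Ioc 0 b) y dy) (hz : SolvesLiouvilleOn Q (Ioc 0 b) z dz)
    (hQ : ∀ x ∈ Ioc 0 b, 1 ≤ x ^ 2 * Q x)
    (hint : IntegrableOn (fun x => y x ^ 2 + z x ^ 2) (Ioo 0 b)) :
    y b * dz b - z b * dy b = 0 := by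
  have hmono := monotoneOn_sq_add_sq_div_sq hy hz hQ hint
  refine wronskian_eq_zero_of_sq_add_sq_le (C := (y b ^ 2 + z b ^ 2) / b ^ 2) hb hy hz
    (fun x hx => by nlinarith [hQ x hx, pow_pos hx.1 2]) fun x hx => ?_
  exact (div_le_iff₀ (pow_pos hx.1 2)).mp (hmono hx ⟨hb, le_rfl⟩ hx.2)

end SolvesLiouvilleOn

/-- the square-integrable solutions of the Liouville normal form
`y'' = (l(l+1)/x²)(1+ω(x))y` near `x = 0` form a space of dimension at most one:
any two of them are linearly dependent. -/
theorem statement_16 (l : ℕ) (hl : 1 ≤ l) (δ M : ℝ) (hδ : 0 < δ)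
    (ω : ℝ → ℝ) (hω : ContinuousOn ω (Set.Ioc 0 δ))
    (hωb : ∀ x ∈ Set.Ioc (0 : ℝ) δ, |ω x| ≤ M * x ^ 2)
    (y z dy dz : ℝ → ℝ)
    (hy : ∀ x ∈ Set.Ioc (0 : ℝ) δ, HasDerivAt y (dy x) x)
    (hy' : ∀ x ∈ Set.Ioc (0 : ℝ) δ,
      HasDerivAt dy (((l * (l + 1) : ℕ) : ℝ) / x ^ 2 * (1 + ω x) * y x) x)
    (hz : ∀ x ∈ Set.Ioc (0 : ℝ) δ, HasDerivAt z (dz x) x)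
    (hz' : ∀ x ∈ Set.Ioc (0 : ℝ) δ,
      HasDerivAt dz (((l * (l + 1) : ℕ) : ℝ) / x ^ 2 * (1 + ω x) * z x) x)
    (hyL2 : IntegrableOn (fun x => y x ^ 2) (Set.Ioo 0 δ))
    (hzL2 : IntegrableOn (fun x => z x ^ 2) (Set.Ioo 0 δ)) :
    ∃ a b : ℝ, ¬(a = 0 ∧ b = 0) ∧
      ∀ x ∈ Set.Ioc (0 : ℝ) δ, a * y x + b * z x = 0 := by
  set Q : ℝ → ℝ := fun x => ((l * (l + 1) : ℕ) : ℝ) / x ^ 2 * (1 + ω x)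
  have hysol : SolvesLiouvilleOn Q (Ioc 0 δ) y dy := fun x hx => ⟨hy x hx, hy' x hx⟩
  have hzsol : SolvesLiouvilleOn Q (Ioc 0 δ) z dz := fun x hx => ⟨hz x hx, hz' x hx⟩
  have hQ : ContinuousOn Q (Ioc 0 δ) :=
    (continuousOn_const.div (continuousOn_pow 2) fun x hx => pow_ne_zero 2 hx.1.ne').mul
      (continuousOn_const.add hω)
  have hn : (2 : ℝ) ≤ ((l * (l + 1) : ℕ) : ℝ) := by
    exact_mod_cast Nat.mul_le_mul hl (Nat.succ_le_succ hl)
  obtain ⟨b, hb, hQb⟩ := exists_one_le_sq_mul_potential hn hδ hωb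
  have hsub : Ioc 0 b ⊆ Ioc 0 δ := Ioc_subset_Ioc_right hb.2
  have hWb := SolvesLiouvilleOn.wronskian_eq_zero_of_integrableOn hb.1 (hysol.mono hsub)
    (hzsol.mono hsub) hQb ((hyL2.add hzL2).mono_set (Ioo_subset_Ioo_right hb.2))
  exact hysol.exists_dependent_of_wronskian_eq_zero hzsol ordConnected_Ioc hQ fun x hx =>
    (hysol.wronskian_eq hzsol ordConnected_Ioc hx (hsub ⟨hb.1, le_rfl⟩)).trans hWb
end

section
/- Let R > 0 and let c : (0,R] → ℝ be continuous, nonnegative and bounded. Assume there exists a twice continuously differentiable function φ : (0,R] → ℝ with φ(r) > 0 for every r ∈ (0,R] satisfying φ''(r) + (2/r) φ'(r) − (2/r²) φ(r) + c(r) φ(r) = 0 on (0,R]. Then for every real-valued V ∈ C_c^∞((0,R)) one has ∫_0^R ( V'(r)² + (2/r²) V(r)² ) r² dr ≥ ∫_0^R c(r) V(r)² r² dr. -/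
open MeasureTheory Real Filter

noncomputable section

/-- if the operator `A = −(1/r²)(r²·)' + 2/r² − c(r)` admits a
positive C² solution `φ` of `φ'' + (2/r)φ' − (2/r²)φ + cφ = 0` on `(0,R]`, then
for every real `V ∈ C_c^∞((0,R))`,
`∫ (V'² + (2/r²)V²) r² dr ≥ ∫ c V² r² dr` (i.e. the least eigenvalue of `A` is ≥ 0). -/
theorem statement_17 (R : ℝ) (hR : 0 < R)
    (c : ℝ → ℝ) (hc : ContinuousOn c (Set.Ioc 0 R))
    (hc0 : ∀ r ∈ Set.Ioc (0 : ℝ) R, 0 ≤ c r)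
    (hcb : ∃ Cb : ℝ, ∀ r ∈ Set.Ioc (0 : ℝ) R, c r ≤ Cb)
    (φ dφ : ℝ → ℝ)
    (hφpos : ∀ r ∈ Set.Ioc (0 : ℝ) R, 0 < φ r)
    (hφ : ∀ r ∈ Set.Ioc (0 : ℝ) R, HasDerivAt φ (dφ r) r)
    (hφ'' : ∀ r ∈ Set.Ioc (0 : ℝ) R,
      HasDerivAt dφ (-(2 / r) * dφ r + (2 / r ^ 2) * φ r - c r * φ r) r)
    (V : ℝ → ℝ) (hV : ContDiff ℝ (⊤ : ℕ∞) V) (hVc : HasCompactSupport V)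
    (hVs : tsupport V ⊆ Set.Ioo 0 R) :
    ∫ r in Set.Ioo (0 : ℝ) R, c r * V r ^ 2 * r ^ 2
      ≤ ∫ r in Set.Ioo (0 : ℝ) R, (deriv V r ^ 2 + (2 / r ^ 2) * V r ^ 2) * r ^ 2 := by
  classical
  have hV' : ∀ x, HasDerivAt V (deriv V x) x :=
    fun x => (hV.differentiable (by simp) x).hasDerivAt
  have hVcont : Continuous V := hV.continuous
  have hdVcont : Continuous (deriv V) := hV.continuous_deriv (by simp)
  by_cases hKe : tsupport V = ∅
  · -- V ≡ 0, both integrals coincide trivially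
    have hV0 : ∀ x, V x = 0 := by
      intro x
      exact image_eq_zero_of_notMem_tsupport (by simp [hKe])
    have hdV0 : ∀ x, deriv V x = 0 := by
      intro x
      have : x ∉ Function.support (deriv V) := fun h => by
        have := support_deriv_subset h
        simp [hKe] at this
      simpa [Function.mem_support, not_not] using this
    have e1 : (∫ r in Set.Ioo (0 : ℝ) R, c r * V r ^ 2 * r ^ 2) = 0 := by
      simp [hV0]
    have e2 : (∫ r in Set.Ioo (0 : ℝ) R, (deriv V r ^ 2 + (2 / r ^ 2) * V r ^ 2) * r ^ 2) = 0 := by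
      simp [hV0, hdV0]
    rw [e1, e2]
  · -- main case
    set K := tsupport V with hKdef
    have hKc : IsCompact K := hVc
    have hKne : K.Nonempty := Set.nonempty_iff_ne_empty.mpr hKe
    set a := sInf K with hadef
    set b := sSup K with hbdef
    have haK : a ∈ K := hKc.sInf_mem hKne
    have hbK : b ∈ K := hKc.sSup_mem hKne
    have ha : a ∈ Set.Ioo (0:ℝ) R := hVs haK
    have hb : b ∈ Set.Ioo (0:ℝ) R := hVs hbK
    have hab : a ≤ b := le_csSup hKc.bddAbove haK
    set a' := a / 2 with ha'def
    set b' := (b + R) / 2 with hb'def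
    have ha'0 : 0 < a' := by simp only [ha'def]; linarith [ha.1]
    have ha'a : a' < a := by simp only [ha'def]; linarith [ha.1]
    have hbb' : b < b' := by simp only [hb'def]; linarith [hb.2]
    have hb'R : b' < R := by simp only [hb'def]; linarith [hb.2]
    have ha'b' : a' ≤ b' := by linarith
    have hKsub : K ⊆ Set.Ioo a' b' := fun x hx =>
      ⟨lt_of_lt_of_le ha'a (csInf_le hKc.bddBelow hx),
       lt_of_le_of_lt (le_csSup hKc.bddAbove hx) hbb'⟩
    have hV0 : ∀ x, x ∉ Set.Ioo a' b' → V x = 0 := fun x hx =>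
      image_eq_zero_of_notMem_tsupport (fun h => hx (hKsub h))
    have hdV0 : ∀ x, x ∉ Set.Ioo a' b' → deriv V x = 0 := by
      intro x hx
      by_contra h
      exact hx (hKsub (support_deriv_subset h))
    have hsubIoo : Set.Ioo a' b' ⊆ Set.Ioo (0:ℝ) R := fun x hx =>
      ⟨lt_trans ha'0 hx.1, lt_trans hx.2 hb'R⟩
    have hS : Set.Icc a' b' ⊆ Set.Ioc (0:ℝ) R := fun x hx =>
      ⟨lt_of_lt_of_le ha'0 hx.1, le_of_lt (lt_of_le_of_lt hx.2 hb'R)⟩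
    -- conversion of set integrals to interval integrals
    have conv : ∀ f : ℝ → ℝ, (∀ x, x ∉ Set.Ioo a' b' → f x = 0) →
        (∫ r in Set.Ioo (0:ℝ) R, f r) = ∫ r in a'..b', f r := by
      intro f hf
      rw [MeasureTheory.setIntegral_eq_integral_of_forall_compl_eq_zero
            (fun x hx => hf x (fun h => hx (hsubIoo h))),
          intervalIntegral.integral_of_le ha'b',
          MeasureTheory.integral_Ioc_eq_integral_Ioo,
          MeasureTheory.setIntegral_eq_integral_of_forall_compl_eq_zero hf]
    have hcv : (∫ r in Set.Ioo (0:ℝ) R, c r * V r ^ 2 * r ^ 2)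
        = ∫ r in a'..b', c r * V r ^ 2 * r ^ 2 :=
      conv _ (fun x hx => by simp [hV0 x hx])
    have hkin : (∫ r in Set.Ioo (0:ℝ) R, (deriv V r ^ 2 + (2 / r ^ 2) * V r ^ 2) * r ^ 2)
        = ∫ r in a'..b', (deriv V r ^ 2 + (2 / r ^ 2) * V r ^ 2) * r ^ 2 :=
      conv _ (fun x hx => by simp [hV0 x hx, hdV0 x hx])
    rw [hcv, hkin]
    -- abbreviations
    set G : ℝ → ℝ := fun r => r ^ 2 * (deriv V r - (dφ r / φ r) * V r) ^ 2 with hGdef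
    set D : ℝ → ℝ := fun r =>
      (deriv V r ^ 2 + (2 / r ^ 2) * V r ^ 2) * r ^ 2 - c r * V r ^ 2 * r ^ 2 - G r with hDdef
    set F : ℝ → ℝ := fun r => r ^ 2 * (dφ r / φ r) * V r ^ 2 with hFdef
    -- continuity facts on Icc a' b'
    have hφcont : ContinuousOn φ (Set.Icc a' b') := fun x hx =>
      ((hφ x (hS hx)).continuousAt).continuousWithinAt
    have hdφcont : ContinuousOn dφ (Set.Icc a' b') := fun x hx =>
      ((hφ'' x (hS hx)).continuousAt).continuousWithinAt
    have hφne : ∀ x ∈ Set.Icc a' b', φ x ≠ 0 := fun x hx => ne_of_gt (hφpos x (hS hx))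
    have hrne : ∀ x ∈ Set.Icc a' b', x ≠ 0 := fun x hx => ne_of_gt (lt_of_lt_of_le ha'0 hx.1)
    have hψcont : ContinuousOn (fun r => dφ r / φ r) (Set.Icc a' b') :=
      hdφcont.div hφcont hφne
    have hGcont : ContinuousOn G (Set.Icc a' b') := by
      simp only [hGdef]
      exact (continuous_pow 2).continuousOn.mul
        (((hdVcont.continuousOn.sub (hψcont.mul hVcont.continuousOn)).pow 2))
    have hf1cont : ContinuousOn (fun r => (deriv V r ^ 2 + (2 / r ^ 2) * V r ^ 2) * r ^ 2)
        (Set.Icc a' b') := by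
      exact (((hdVcont.continuousOn.pow 2).add
        ((continuousOn_const.div ((continuous_pow 2).continuousOn)
          (fun x hx => pow_ne_zero 2 (hrne x hx))).mul
          (hVcont.continuousOn.pow 2)))).mul ((continuous_pow 2).continuousOn)
    have hf2cont : ContinuousOn (fun r => c r * V r ^ 2 * r ^ 2) (Set.Icc a' b') :=
      ((hc.mono hS).mul (hVcont.continuousOn.pow 2)).mul ((continuous_pow 2).continuousOn)
    have hDcont : ContinuousOn D (Set.Icc a' b') := by
      simp only [hDdef]
      exact (hf1cont.sub hf2cont).sub hGcont
    have huIcc : Set.uIcc a' b' = Set.Icc a' b' := Set.uIcc_of_le ha'b'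
    have hGint : IntervalIntegrable G volume a' b' :=
      (huIcc ▸ hGcont).intervalIntegrable
    have hf1int : IntervalIntegrable
        (fun r => (deriv V r ^ 2 + (2 / r ^ 2) * V r ^ 2) * r ^ 2) volume a' b' :=
      (huIcc ▸ hf1cont).intervalIntegrable
    have hf2int : IntervalIntegrable (fun r => c r * V r ^ 2 * r ^ 2) volume a' b' :=
      (huIcc ▸ hf2cont).intervalIntegrable
    have hDint : IntervalIntegrable D volume a' b' :=
      (huIcc ▸ hDcont).intervalIntegrable
    -- the key derivative identity
    have hFD : ∀ r ∈ Set.uIcc a' b', HasDerivAt F (D r) r := by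
      intro r hr
      rw [huIcc] at hr
      have hrI : r ∈ Set.Ioc 0 R := hS hr
      have hr0 : (0:ℝ) < r := hrI.1
      have hp : 0 < φ r := hφpos r hrI
      have h2 : HasDerivAt φ (dφ r) r := hφ r hrI
      have h3 : HasDerivAt dφ (-(2 / r) * dφ r + (2 / r ^ 2) * φ r - c r * φ r) r := hφ'' r hrI
      have hψd : HasDerivAt (fun x => dφ x / φ x)
          (((-(2 / r) * dφ r + (2 / r ^ 2) * φ r - c r * φ r) * φ r - dφ r * dφ r) / φ r ^ 2) r :=
        h3.div h2 (ne_of_gt hp)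
      have hVd := hV' r
      have hV2 : HasDerivAt (fun x => V x ^ 2) (2 * V r * deriv V r) r := by
        have := hVd.fun_pow 2
        simpa [mul_comm, mul_assoc, mul_left_comm] using this
      have hr2 : HasDerivAt (fun x : ℝ => x ^ 2) (2 * r) r := by
        simpa using hasDerivAt_pow 2 r
      have hmain := (hr2.fun_mul hψd).fun_mul hV2
      have hEq : F = fun x => (x ^ 2 * (dφ x / φ x)) * V x ^ 2 := by
        funext x; simp [hFdef, mul_assoc]
      rw [hEq]
      refine hmain.congr_deriv ?_
      symm
      have hpne : φ r ≠ 0 := ne_of_gt hp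
      have hrne' : r ≠ 0 := ne_of_gt hr0
      simp only [hDdef, hGdef]
      field_simp
      ring
    have hFTC : (∫ r in a'..b', D r) = F b' - F a' :=
      intervalIntegral.integral_eq_sub_of_hasDerivAt hFD hDint
    have hFa' : F a' = 0 := by
      have : V a' = 0 := hV0 a' (by simp)
      simp [hFdef, this]
    have hFb' : F b' = 0 := by
      have : V b' = 0 := hV0 b' (by simp)
      simp [hFdef, this]
    have hDzero : (∫ r in a'..b', D r) = 0 := by rw [hFTC, hFa', hFb']; ring
    have hGnonneg : 0 ≤ ∫ r in a'..b', G r :=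
      intervalIntegral.integral_nonneg ha'b' (fun x _ => by
        simp only [hGdef]; positivity)
    have hsplit : (∫ r in a'..b', (deriv V r ^ 2 + (2 / r ^ 2) * V r ^ 2) * r ^ 2)
        - (∫ r in a'..b', c r * V r ^ 2 * r ^ 2)
        = (∫ r in a'..b', D r) + ∫ r in a'..b', G r := by
      rw [← intervalIntegral.integral_sub hf1int hf2int,
          ← intervalIntegral.integral_add hDint hGint]
      apply intervalIntegral.integral_congr
      intro x _
      simp only [hDdef]
      ring
    linarith [hsplit, hDzero, hGnonneg]
end
end

section
/- Let R > 0 and let c : (0,R) → ℝ be continuous with c(r) > 0 for all r ∈ (0,R). Suppose φ : (0,R] → ℝ is twice continuously differentiable on (0,R], bounded, satisfies φ(r) ≥ 0 for all r ∈ (0,R), φ(R) = 0 and φ'(R) = 0, the integrability condition ∫_0^R c(r) φ(r) r² dr < ∞, and the differential equation φ''(r) + (2/r) φ'(r) − (2/r²) φ(r) + c(r) φ(r) = 0 on (0,R). Then φ is identically zero on (0,R]. -/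
/-!
Substituting `φ = r w` turns the equation into `(r⁴ w')' = -c r⁴ w`. Since `c, w ≥ 0`, the
flux `r⁴ w' = r³ φ' - r² φ` is nonincreasing on `(0, R]` and vanishes at `R`, so `w' ≥ 0`.
Hence `w` is nondecreasing with `w(R) = 0`, so `w ≤ 0`; together with `φ ≥ 0` this forces `φ = 0`.
-/

open MeasureTheory Set

section MonotoneIoc

variable {f f' : ℝ → ℝ} {a b : ℝ}

theorem monotoneOn_Ioc_of_hasDerivAt_nonneg (hf : ContinuousOn f (Ioc a b))
    (hderiv : ∀ x ∈ Ioo a b, HasDerivAt f (f' x) x) (hnonneg : ∀ x ∈ Ioo a b, 0 ≤ f' x) :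
    MonotoneOn f (Ioc a b) :=
  monotoneOn_of_hasDerivWithinAt_nonneg (convex_Ioc a b) hf
    (fun x hx ↦ (hderiv x (by rwa [interior_Ioc] at hx)).hasDerivWithinAt)
    (fun x hx ↦ hnonneg x (by rwa [interior_Ioc] at hx))

theorem antitoneOn_Ioc_of_hasDerivAt_nonpos (hf : ContinuousOn f (Ioc a b))
    (hderiv : ∀ x ∈ Ioo a b, HasDerivAt f (f' x) x) (hnonpos : ∀ x ∈ Ioo a b, f' x ≤ 0) :
    AntitoneOn f (Ioc a b) :=
  antitoneOn_of_hasDerivWithinAt_nonpos (convex_Ioc a b) hf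
    (fun x hx ↦ (hderiv x (by rwa [interior_Ioc] at hx)).hasDerivWithinAt)
    (fun x hx ↦ hnonpos x (by rwa [interior_Ioc] at hx))

end MonotoneIoc

section RadialEquation

variable {φ dφ : ℝ → ℝ} {r k : ℝ}

theorem hasDerivAt_cube_mul_sub_sq_mul (hr : r ≠ 0) (hφ : HasDerivAt φ (dφ r) r)
    (hdφ : HasDerivAt dφ (-(2 / r) * dφ r + (2 / r ^ 2) * φ r - k * φ r) r) :
    HasDerivAt (fun x ↦ x ^ 3 * dφ x - x ^ 2 * φ x) (-(k * r ^ 3 * φ r)) r := by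
  refine (((hasDerivAt_pow 3 r).fun_mul hdφ).fun_sub ((hasDerivAt_pow 2 r).fun_mul hφ)).congr_deriv ?_
  field_simp
  ring

theorem hasDerivAt_div_id (hr : r ≠ 0) (hφ : HasDerivAt φ (dφ r) r) :
    HasDerivAt (fun x ↦ φ x / x) ((r ^ 3 * dφ r - r ^ 2 * φ r) / r ^ 4) r := by
  refine (hφ.fun_div (hasDerivAt_id r) hr).congr_deriv ?_
  simp only [id]
  field_simp

end RadialEquation

theorem statement_18_general (R : ℝ)
    (c : ℝ → ℝ)
    (hc0 : ∀ r ∈ Set.Ioo (0 : ℝ) R, 0 < c r)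
    (φ dφ : ℝ → ℝ)
    (hφd : ∀ r ∈ Set.Ioc (0 : ℝ) R, HasDerivWithinAt φ (dφ r) (Set.Ioc 0 R) r)
    (hdcont : ContinuousOn dφ (Set.Ioc 0 R))
    (hφ'' : ∀ r ∈ Set.Ioo (0 : ℝ) R,
      HasDerivWithinAt dφ (-(2 / r) * dφ r + (2 / r ^ 2) * φ r - c r * φ r)
        (Set.Ioc 0 R) r)
    (hφ0 : ∀ r ∈ Set.Ioo (0 : ℝ) R, 0 ≤ φ r)
    (hφR : φ R = 0) (hdR : dφ R = 0) :
    ∀ r ∈ Set.Ioc (0 : ℝ) R, φ r = 0 := by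
  intro r hr
  have hRmem : R ∈ Ioc 0 R := ⟨hr.1.trans_le hr.2, le_rfl⟩
  have hnhds : ∀ x ∈ Ioo 0 R, Ioc 0 R ∈ nhds x := fun x hx ↦ Ioc_mem_nhds hx.1 hx.2
  have hφcont : ContinuousOn φ (Ioc 0 R) := fun x hx ↦ (hφd x hx).continuousWithinAt
  have hφderiv : ∀ x ∈ Ioo 0 R, HasDerivAt φ (dφ x) x := fun x hx ↦
    (hφd x (Ioo_subset_Ioc_self hx)).hasDerivAt (hnhds x hx)
  have hflux : ∀ x ∈ Ioc 0 R, 0 ≤ x ^ 3 * dφ x - x ^ 2 * φ x := by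
    intro x hx
    have hanti := antitoneOn_Ioc_of_hasDerivAt_nonpos
      (((continuousOn_pow 3).mul hdcont).sub ((continuousOn_pow 2).mul hφcont))
      (fun y hy ↦ hasDerivAt_cube_mul_sub_sq_mul hy.1.ne' (hφderiv y hy)
        ((hφ'' y hy).hasDerivAt (hnhds y hy)))
      fun y hy ↦ neg_nonpos.2 <|
        mul_nonneg (mul_nonneg (hc0 y hy).le (pow_nonneg hy.1.le 3)) (hφ0 y hy)
    simpa [hφR, hdR] using hanti hx hRmem hx.2
  have hmono := monotoneOn_Ioc_of_hasDerivAt_nonneg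
    (hφcont.div continuousOn_id fun x hx ↦ hx.1.ne')
    (fun y hy ↦ hasDerivAt_div_id hy.1.ne' (hφderiv y hy))
    fun y hy ↦ div_nonneg (hflux y (Ioo_subset_Ioc_self hy)) (pow_pos hy.1 4).le
  have hw : φ r / r ≤ 0 := by simpa [hφR] using hmono hr hRmem hr.2
  rcases hr.2.lt_or_eq with hlt | rfl
  · exact le_antisymm (by simpa using (div_le_iff₀ hr.1).1 hw) (hφ0 r ⟨hr.1, hlt⟩)
  · exact hφR

/-- a bounded nonnegative C² solution of
`φ'' + (2/r)φ' − (2/r²)φ + cφ = 0` on `(0,R)` with `c > 0`, `φ(R) = 0`, `φ'(R) = 0`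
and `∫ c φ r² dr < ∞` must vanish identically. -/
theorem statement_18 (R : ℝ) (hR : 0 < R)
    (c : ℝ → ℝ) (hc : ContinuousOn c (Set.Ioo 0 R))
    (hc0 : ∀ r ∈ Set.Ioo (0 : ℝ) R, 0 < c r)
    (φ dφ : ℝ → ℝ)
    (hφd : ∀ r ∈ Set.Ioc (0 : ℝ) R, HasDerivWithinAt φ (dφ r) (Set.Ioc 0 R) r)
    (hdcont : ContinuousOn dφ (Set.Ioc 0 R))
    (hφ'' : ∀ r ∈ Set.Ioo (0 : ℝ) R,
      HasDerivWithinAt dφ (-(2 / r) * dφ r + (2 / r ^ 2) * φ r - c r * φ r)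
        (Set.Ioc 0 R) r)
    (hbdd : ∃ B : ℝ, ∀ r ∈ Set.Ioc (0 : ℝ) R, |φ r| ≤ B)
    (hφ0 : ∀ r ∈ Set.Ioo (0 : ℝ) R, 0 ≤ φ r)
    (hφR : φ R = 0) (hdR : dφ R = 0)
    (hint : IntegrableOn (fun r => c r * φ r * r ^ 2) (Set.Ioo 0 R)) :
    ∀ r ∈ Set.Ioc (0 : ℝ) R, φ r = 0 :=
  statement_18_general R c hc0 φ dφ hφd hdcont hφ'' hφ0 hφR hdR
end
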